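/- arXiv:0905.3407 — 3 statements merged into one kernel-verified Lean document; each statement's English description precedes it below -/
import Mathlib

section
/- Let X be a random variable with the Poisson distribution of parameter μ > 0, and let ε > 1. Then P(X ≥ εμ) ≤ e^{-μ}(e/ε)^{εμ}. Moreover, e^{-μ}(e/ε)^{εμ} = exp(-μ(1 - ε + ε ln ε)), and if ε > e then the constant 1 - ε + ε ln ε is strictly greater than 1, so that P(X ≥ εμ) ≤ e^{-μ}. -/
/-!
Chernoff's bound with the exponential tilt `ε ^ X`: on the event `εμ ≤ X` the weight
`ε ^ (X - εμ)` is at least `1`, and its expectation under the Poisson law of parameter `μ`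
is `e^{-μ} ε^{-εμ} ∑ (εμ)^k / k! = e^{μ(ε - 1)} ε^{-εμ}`, which is the claimed bound.
-/

open MeasureTheory

theorem measure_le_natCast_le_tsum_rpow_mul {Ω : Type*} [MeasurableSpace Ω] (P : Measure Ω)
    (X : Ω → ℕ) {a r : ℝ} (hr : 1 ≤ r) :
    P {ω | a ≤ X ω} ≤ ∑' k : ℕ, ENNReal.ofReal (r ^ ((k : ℝ) - a)) * P {ω | X ω = k} := by
  have hcover : {ω | a ≤ X ω} ⊆ ⋃ k : ℕ, {ω | X ω = k ∧ a ≤ k} :=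
    fun ω hω => Set.mem_iUnion.2 ⟨X ω, rfl, hω⟩
  refine (measure_mono hcover).trans
    ((measure_iUnion_le _).trans (ENNReal.tsum_le_tsum fun k => ?_))
  by_cases hk : a ≤ k
  · calc P {ω | X ω = k ∧ a ≤ k} ≤ P {ω | X ω = k} := measure_mono fun ω h => h.1
      _ ≤ _ := le_mul_of_one_le_left' <|
          ENNReal.one_le_ofReal.2 (Real.one_le_rpow hr (sub_nonneg.2 hk))
  · simp [hk]

theorem hasSum_rpow_sub_mul_poisson (μ a : ℝ) {r : ℝ} (hr : 0 < r) :
    HasSum (fun k : ℕ => r ^ ((k : ℝ) - a) * (Real.exp (-μ) * μ ^ k / k.factorial))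
      (Real.exp (μ * (r - 1) - a * Real.log r)) := by
  have hterm : ∀ k : ℕ, r ^ ((k : ℝ) - a) * (Real.exp (-μ) * μ ^ k / k.factorial) =
      Real.exp (-μ) * r ^ (-a) * ((r * μ) ^ k / k.factorial) := fun k => by
    rw [Real.rpow_sub hr, Real.rpow_natCast, Real.rpow_neg hr.le, mul_pow]
    ring
  have hsum : Real.exp (μ * (r - 1) - a * Real.log r) =
      Real.exp (-μ) * r ^ (-a) * Real.exp (r * μ) := by
    rw [Real.rpow_def_of_pos hr, ← Real.exp_add, ← Real.exp_add]
    ring_nf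
  rw [funext hterm, hsum, Real.exp_eq_exp_ℝ]
  exact (NormedSpace.expSeries_div_hasSum_exp (r * μ)).mul_left _

theorem exp_neg_mul_exp_one_div_rpow {ε : ℝ} (hε : 0 < ε) (μ : ℝ) :
    Real.exp (-μ) * (Real.exp 1 / ε) ^ (ε * μ) = Real.exp (-μ * (1 - ε + ε * Real.log ε)) := by
  rw [Real.rpow_def_of_pos (div_pos (Real.exp_pos 1) hε),
    Real.log_div (Real.exp_ne_zero 1) hε.ne', Real.log_exp, ← Real.exp_add]
  ring_nf

theorem one_lt_one_sub_add_mul_log {ε : ℝ} (hε : Real.exp 1 < ε) :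
    1 < 1 - ε + ε * Real.log ε := by
  have hlog : 1 < Real.log ε := (Real.lt_log_iff_exp_lt ((Real.exp_pos 1).trans hε)).2 hε
  nlinarith [Real.exp_pos 1]

theorem poisson_upper_tail_chernoff_general
    {Ω : Type*} [MeasurableSpace Ω] (ℙ : Measure Ω)
    (X : Ω → ℕ) (μ ε : ℝ) (hμ : 0 < μ) (hε : 1 < ε)
    (hX : ∀ k : ℕ, ℙ {ω | X ω = k} =
      ENNReal.ofReal (Real.exp (-μ) * μ ^ k / (Nat.factorial k))) :
    ℙ {ω | ε * μ ≤ (X ω : ℝ)} ≤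
        ENNReal.ofReal (Real.exp (-μ) * (Real.exp 1 / ε) ^ (ε * μ)) ∧
    Real.exp (-μ) * (Real.exp 1 / ε) ^ (ε * μ) =
        Real.exp (-μ * (1 - ε + ε * Real.log ε)) ∧
    (Real.exp 1 < ε →
      1 < 1 - ε + ε * Real.log ε ∧
      ℙ {ω | ε * μ ≤ (X ω : ℝ)} ≤ ENNReal.ofReal (Real.exp (-μ))) := by
  have hε0 : 0 < ε := one_pos.trans hε
  have hval := exp_neg_mul_exp_one_div_rpow hε0 μ
  have hmgf := hasSum_rpow_sub_mul_poisson μ (ε * μ) hε0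
  have htail : ℙ {ω | ε * μ ≤ (X ω : ℝ)} ≤
      ENNReal.ofReal (Real.exp (-μ * (1 - ε + ε * Real.log ε))) :=
    calc ℙ {ω | ε * μ ≤ (X ω : ℝ)}
        ≤ ∑' k : ℕ, ENNReal.ofReal (ε ^ ((k : ℝ) - ε * μ)) * ℙ {ω | X ω = k} :=
          measure_le_natCast_le_tsum_rpow_mul ℙ X hε.le
      _ = ENNReal.ofReal (Real.exp (μ * (ε - 1) - ε * μ * Real.log ε)) := by
          rw [← hmgf.tsum_eq, ENNReal.ofReal_tsum_of_nonneg (fun k => by positivity) hmgf.summable]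
          simp only [hX, ENNReal.ofReal_mul (Real.rpow_nonneg hε0.le _)]
      _ = _ := by ring_nf
  refine ⟨hval ▸ htail, hval, fun he => ⟨one_lt_one_sub_add_mul_log he, htail.trans ?_⟩⟩
  exact ENNReal.ofReal_le_ofReal <|
    Real.exp_le_exp.2 (by nlinarith [one_lt_one_sub_add_mul_log he])

/-- If `X` is a random variable with the Poisson distribution of
parameter `μ > 0` (i.e. `P(X = k) = e^{-μ} μ^k / k!` for every `k : ℕ`) and `ε > 1`, then
`P(X ≥ εμ) ≤ e^{-μ}(e/ε)^{εμ}`; moreover `e^{-μ}(e/ε)^{εμ} = exp(-μ(1 - ε + ε ln ε))`,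
and if `ε > e` then `1 - ε + ε ln ε > 1`, so that `P(X ≥ εμ) ≤ e^{-μ}`. -/
theorem poisson_upper_tail_chernoff
    {Ω : Type*} [MeasurableSpace Ω] (ℙ : Measure Ω) [IsProbabilityMeasure ℙ]
    (X : Ω → ℕ) (hXmeas : Measurable X) (μ ε : ℝ) (hμ : 0 < μ) (hε : 1 < ε)
    (hX : ∀ k : ℕ, ℙ {ω | X ω = k} =
      ENNReal.ofReal (Real.exp (-μ) * μ ^ k / (Nat.factorial k))) :
    ℙ {ω | ε * μ ≤ (X ω : ℝ)} ≤
        ENNReal.ofReal (Real.exp (-μ) * (Real.exp 1 / ε) ^ (ε * μ)) ∧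
    Real.exp (-μ) * (Real.exp 1 / ε) ^ (ε * μ) =
        Real.exp (-μ * (1 - ε + ε * Real.log ε)) ∧
    (Real.exp 1 < ε →
      1 < 1 - ε + ε * Real.log ε ∧
      ℙ {ω | ε * μ ≤ (X ω : ℝ)} ≤ ENNReal.ofReal (Real.exp (-μ))) :=
  poisson_upper_tail_chernoff_general ℙ X μ ε hμ hε hX
end

section
/- Fix real constants β ≥ 2, 0 < ε₁ < 1 and ε₂ > e with 1 - ε₁ + ε₁ ln ε₁ > 1/(√2 β). Let a : ℕ → ℝ satisfy a(n) = √2·β·(ln n)/n. Suppose that for each n ≥ 2, on a probability space there are k(n) = ⌈1/a(n)⌉ random variables X_{n,1}, …, X_{n,k(n)}, each (not necessarily independent) distributed according to the Poisson distribution with parameter n·a(n). Then the probability of the event that there exists an index i with X_{n,i} ≤ ε₁·n·a(n) or X_{n,i} ≥ ε₂·n·a(n) tends to 0 as n → ∞. -/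
/-!
Chernoff bound by exponential tilting: the Poisson(r) weight at `j` is `ε ^ (-j) * exp ((ε - 1) r)`
times the Poisson(εr) weight, and on the tail `{j ≤ εr}` (for `ε ≤ 1`) or `{εr ≤ j}` (for
`1 ≤ ε`) one has `ε ^ (-j) ≤ ε ^ (-εr)`; so each tail has probability at most
`exp (-r (1 - ε + ε log ε))`. With `r = n a(n) = √2 β ln n`, a union bound over the `k(n) ≤ n`
cells gives at most `n ^ (1 - √2 β (1 - ε₁ + ε₁ ln ε₁)) + n ^ (1 - √2 β (1 - ε₂ + ε₂ ln ε₂))`.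
Both exponents are negative: the first by the hypothesis on `ε₁`, the second because `ε₂ ≥ e`
makes `1 - ε₂ + ε₂ ln ε₂ ≥ 1`.
-/

open MeasureTheory Filter Real
open scoped ENNReal Nat Topology

/-- `r * poissonRate ε` is the Cramér rate function of Poisson(r) at `εr`. -/
noncomputable def poissonRate (ε : ℝ) : ℝ := 1 - ε + ε * log ε

lemma one_le_poissonRate {ε : ℝ} (hε : exp 1 ≤ ε) : 1 ≤ poissonRate ε := by
  have hε0 : 0 < ε := (exp_pos 1).trans_le hε
  have hlog : 1 ≤ log ε := (le_log_iff_exp_le hε0).mpr hε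
  unfold poissonRate
  nlinarith

lemma poisson_pmf_le_of_rpow_le {r ε : ℝ} (hr : 0 ≤ r) (hε : 0 < ε) (j : ℕ)
    (hj : ε ^ (ε * r) ≤ ε ^ (j : ℝ)) :
    exp (-r) * r ^ j / j ! ≤
      exp (-(r * poissonRate ε)) * (exp (-(ε * r)) * (ε * r) ^ j / j !) := by
  have htilt : exp (-(r * poissonRate ε)) * exp (-(ε * r)) = exp (-r) / ε ^ (ε * r) := by
    rw [rpow_def_of_pos hε, eq_div_iff (exp_pos _).ne', ← exp_add, ← exp_add, poissonRate]
    ring_nf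
  have hpow : r ^ j ≤ (ε * r) ^ j / ε ^ (ε * r) := by
    rw [le_div_iff₀ (by positivity), mul_pow, ← rpow_natCast ε j, mul_comm]
    exact mul_le_mul_of_nonneg_right hj (by positivity)
  calc exp (-r) * r ^ j / j !
      ≤ exp (-r) * ((ε * r) ^ j / ε ^ (ε * r)) / j ! := by gcongr
    _ = exp (-r) / ε ^ (ε * r) * ((ε * r) ^ j / j !) := by ring
    _ = _ := by rw [← htilt]; ring

section

variable {Ω : Type*} [MeasurableSpace Ω] {P : Measure Ω} {r : ℝ}

lemma poisson_tail_le_of_rpow_le (hr : 0 ≤ r)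
    {X : Ω → ℕ} (hX : ∀ j : ℕ, P {ω | X ω = j} = ENNReal.ofReal (exp (-r) * r ^ j / j !))
    {ε : ℝ} (hε : 0 < ε) {S : Set ℕ} (hS : ∀ j ∈ S, ε ^ (ε * r) ≤ ε ^ (j : ℝ)) :
    P (X ⁻¹' S) ≤ ENNReal.ofReal (exp (-(r * poissonRate ε))) := by
  set tilted : ℕ → ℝ := fun j => exp (-(ε * r)) * (ε * r) ^ j / (j !)
  have htilted : HasSum tilted 1 :=
    ProbabilityTheory.hasSum_one_poissonMeasure ⟨ε * r, by positivity⟩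
  have hpreimage : X ⁻¹' S = ⋃ j ∈ S, {ω | X ω = j} := by ext; simp
  calc P (X ⁻¹' S)
      ≤ ∑' j : S, P {ω | X ω = j} := hpreimage ▸ measure_biUnion_le P S.to_countable _
    _ ≤ ∑' j : S, ENNReal.ofReal (exp (-(r * poissonRate ε)) * tilted j) :=
        ENNReal.tsum_le_tsum fun j => (hX j).trans_le <|
          ENNReal.ofReal_le_ofReal (poisson_pmf_le_of_rpow_le hr hε j (hS j j.2))
    _ ≤ ∑' j : ℕ, ENNReal.ofReal (exp (-(r * poissonRate ε)) * tilted j) :=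
        ENNReal.tsum_comp_le_tsum_of_injective Subtype.val_injective _
    _ = ENNReal.ofReal (exp (-(r * poissonRate ε))) := by
        rw [← ENNReal.ofReal_tsum_of_nonneg (fun j => by positivity)
          (htilted.summable.mul_left _), tsum_mul_left, htilted.tsum_eq, mul_one]

lemma poisson_lower_tail_le (hr : 0 ≤ r)
    {X : Ω → ℕ} (hX : ∀ j : ℕ, P {ω | X ω = j} = ENNReal.ofReal (exp (-r) * r ^ j / j !))
    {ε : ℝ} (hε0 : 0 < ε) (hε1 : ε ≤ 1) :
    P {ω | (X ω : ℝ) ≤ ε * r} ≤ ENNReal.ofReal (exp (-(r * poissonRate ε))) :=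
  poisson_tail_le_of_rpow_le hr hX hε0 (S := {j | (j : ℝ) ≤ ε * r})
    fun _ hj => rpow_le_rpow_of_exponent_ge hε0 hε1 hj

lemma poisson_upper_tail_le (hr : 0 ≤ r)
    {X : Ω → ℕ} (hX : ∀ j : ℕ, P {ω | X ω = j} = ENNReal.ofReal (exp (-r) * r ^ j / j !))
    {ε : ℝ} (hε : 1 ≤ ε) :
    P {ω | ε * r ≤ X ω} ≤ ENNReal.ofReal (exp (-(r * poissonRate ε))) :=
  poisson_tail_le_of_rpow_le hr hX (zero_lt_one.trans_le hε) (S := {j | ε * r ≤ j})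
    fun _ hj => rpow_le_rpow_of_exponent_le hε hj

lemma measure_exists_poisson_tail_le {ι : Type*} [Fintype ι] (X : ι → Ω → ℕ) (hr : 0 ≤ r)
    (hX : ∀ i j, P {ω | X i ω = j} = ENNReal.ofReal (exp (-r) * r ^ j / j !))
    {ε₁ ε₂ : ℝ} (hε₁0 : 0 < ε₁) (hε₁1 : ε₁ ≤ 1) (hε₂ : 1 ≤ ε₂) :
    P {ω | ∃ i, (X i ω : ℝ) ≤ ε₁ * r ∨ ε₂ * r ≤ X i ω} ≤
      ENNReal.ofReal (Fintype.card ι *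
        (exp (-(r * poissonRate ε₁)) + exp (-(r * poissonRate ε₂)))) := by
  have hunion : {ω | ∃ i, (X i ω : ℝ) ≤ ε₁ * r ∨ ε₂ * r ≤ X i ω} =
      ⋃ i, ({ω | (X i ω : ℝ) ≤ ε₁ * r} ∪ {ω | ε₂ * r ≤ X i ω}) := by
    ext; simp
  calc P {ω | ∃ i, (X i ω : ℝ) ≤ ε₁ * r ∨ ε₂ * r ≤ X i ω}
      ≤ ∑ i, P ({ω | (X i ω : ℝ) ≤ ε₁ * r} ∪ {ω | ε₂ * r ≤ X i ω}) :=
        hunion ▸ measure_iUnion_fintype_le P _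
    _ ≤ ∑ _i : ι, (ENNReal.ofReal (exp (-(r * poissonRate ε₁))) +
          ENNReal.ofReal (exp (-(r * poissonRate ε₂)))) :=
        Finset.sum_le_sum fun i _ => (measure_union_le _ _).trans <| add_le_add
          (poisson_lower_tail_le hr (hX i) hε₁0 hε₁1) (poisson_upper_tail_le hr (hX i) hε₂)
    _ = _ := by
        rw [ENNReal.ofReal_mul (by positivity), ENNReal.ofReal_add (by positivity)
          (by positivity), ENNReal.ofReal_natCast, Finset.sum_const, nsmul_eq_mul,
          Finset.card_univ]

end

lemma tendsto_natCast_mul_exp_neg_mul_log {γ : ℝ} (hγ : 1 < γ) :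
    Tendsto (fun n : ℕ => (n : ℝ) * exp (-(γ * log n))) atTop (𝓝 0) := by
  have hrpow : ∀ n : ℕ, 1 ≤ n → (n : ℝ) ^ (-(γ - 1)) = n * exp (-(γ * log n)) := by
    intro n hn
    have hn0 : (0 : ℝ) < n := by exact_mod_cast hn
    rw [rpow_def_of_pos hn0]
    nth_rewrite 2 [← exp_log hn0]
    rw [← exp_add]
    ring_nf
  refine ((tendsto_rpow_neg_atTop (sub_pos.mpr hγ)).comp tendsto_natCast_atTop_atTop).congr' ?_
  filter_upwards [eventually_ge_atTop 1] with n hn using hrpow n hn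

lemma ceil_one_div_div_natCast_le {x : ℝ} (hx : 1 ≤ x) (n : ℕ) : ⌈1 / (x / n)⌉₊ ≤ n := by
  rw [one_div_div, Nat.ceil_le]
  exact div_le_self n.cast_nonneg hx

theorem all_cells_have_order_na_nodes_general
    (β ε₁ ε₂ : ℝ) (hβ : 2 ≤ β) (hε₁0 : 0 < ε₁) (hε₁1 : ε₁ < 1)
    (hε₂ : Real.exp 1 < ε₂)
    (hgap : 1 / (Real.sqrt 2 * β) < 1 - ε₁ + ε₁ * Real.log ε₁)
    (a : ℕ → ℝ) (ha : ∀ n : ℕ, a n = Real.sqrt 2 * β * Real.log n / n)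
    (k : ℕ → ℕ) (hk : ∀ n : ℕ, k n = ⌈1 / a n⌉₊)
    (Ω : ℕ → Type*) (mΩ : ∀ n, MeasurableSpace (Ω n))
    (ℙ : ∀ n, Measure (Ω n))
    (X : ∀ n, Fin (k n) → Ω n → ℕ)
    (hpois : ∀ n : ℕ, 2 ≤ n → ∀ i : Fin (k n), ∀ j : ℕ,
      ℙ n {ω | X n i ω = j} =
        ENNReal.ofReal (Real.exp (-(n * a n)) * (n * a n) ^ j / (Nat.factorial j))) :
    Filter.Tendsto
      (fun n : ℕ => ℙ n {ω | ∃ i : Fin (k n),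
        (X n i ω : ℝ) ≤ ε₁ * (n * a n) ∨ ε₂ * (n * a n) ≤ (X n i ω : ℝ)})
      Filter.atTop (nhds 0) := by
  set c := √2 * β
  have hc : 2 ≤ c := by nlinarith [one_lt_sqrt_two]
  have hγ₁ : 1 < c * poissonRate ε₁ := by
    rwa [div_lt_iff₀' (by positivity)] at hgap
  have hγ₂ : 1 < c * poissonRate ε₂ := by nlinarith [one_le_poissonRate hε₂.le]
  have hbound : ∀ n ≥ 2, ℙ n {ω | ∃ i : Fin (k n),
      (X n i ω : ℝ) ≤ ε₁ * (n * a n) ∨ ε₂ * (n * a n) ≤ (X n i ω : ℝ)} ≤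
      ENNReal.ofReal ((n : ℝ) * exp (-(c * poissonRate ε₁ * log n)) +
        n * exp (-(c * poissonRate ε₂ * log n))) := by
    intro n hn
    have hn2 : (2 : ℝ) ≤ n := by exact_mod_cast hn
    have hlog : 1 ≤ c * log n := by
      nlinarith [log_two_gt_d9, log_le_log two_pos hn2]
    have hr : n * a n = c * log n := by rw [ha]; field_simp
    have hkn : (k n : ℝ) ≤ n := by
      exact_mod_cast hk n ▸ ha n ▸ ceil_one_div_div_natCast_le hlog n
    refine (measure_exists_poisson_tail_le (X n) (by rw [hr]; positivity) (hpois n hn)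
      hε₁0 hε₁1.le ((one_le_exp zero_le_one).trans hε₂.le)).trans (ENNReal.ofReal_le_ofReal ?_)
    rw [Fintype.card_fin, hr, mul_right_comm c (log n) (poissonRate ε₁),
      mul_right_comm c (log n) (poissonRate ε₂), ← mul_add]
    gcongr
  have hlim := ENNReal.tendsto_ofReal ((tendsto_natCast_mul_exp_neg_mul_log hγ₁).add
    (tendsto_natCast_mul_exp_neg_mul_log hγ₂))
  rw [add_zero, ENNReal.ofReal_zero] at hlim
  exact tendsto_of_tendsto_of_tendsto_of_le_of_le' tendsto_const_nhds hlim
    (.of_forall fun _ => zero_le) (eventually_ge_atTop 2 |>.mono hbound)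

/-- Fix `β ≥ 2`, `0 < ε₁ < 1`, `ε₂ > e` with
`1 - ε₁ + ε₁ ln ε₁ > 1/(√2 β)`. Let `a n = √2 β (ln n)/n`. Suppose for each `n ≥ 2`
there are `k n = ⌈1/a n⌉` random variables `X n i`, each distributed according to the
Poisson distribution with parameter `n · a n`. Then the probability that some `X n i`
is `≤ ε₁ n a n` or `≥ ε₂ n a n` tends to `0` as `n → ∞`. -/
theorem all_cells_have_order_na_nodes
    (β ε₁ ε₂ : ℝ) (hβ : 2 ≤ β) (hε₁0 : 0 < ε₁) (hε₁1 : ε₁ < 1)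
    (hε₂ : Real.exp 1 < ε₂)
    (hgap : 1 / (Real.sqrt 2 * β) < 1 - ε₁ + ε₁ * Real.log ε₁)
    (a : ℕ → ℝ) (ha : ∀ n : ℕ, a n = Real.sqrt 2 * β * Real.log n / n)
    (k : ℕ → ℕ) (hk : ∀ n : ℕ, k n = ⌈1 / a n⌉₊)
    (Ω : ℕ → Type*) (mΩ : ∀ n, MeasurableSpace (Ω n))
    (ℙ : ∀ n, Measure (Ω n)) (hprob : ∀ n, IsProbabilityMeasure (ℙ n))
    (X : ∀ n, Fin (k n) → Ω n → ℕ)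
    (hXmeas : ∀ n, ∀ i : Fin (k n), Measurable (X n i))
    (hpois : ∀ n : ℕ, 2 ≤ n → ∀ i : Fin (k n), ∀ j : ℕ,
      ℙ n {ω | X n i ω = j} =
        ENNReal.ofReal (Real.exp (-(n * a n)) * (n * a n) ^ j / (Nat.factorial j))) :
    Filter.Tendsto
      (fun n : ℕ => ℙ n {ω | ∃ i : Fin (k n),
        (X n i ω : ℝ) ≤ ε₁ * (n * a n) ∨ ε₂ * (n * a n) ≤ (X n i ω : ℝ)})
      Filter.atTop (nhds 0) :=
  all_cells_have_order_na_nodes_general β ε₁ ε₂ hβ hε₁0 hε₁1 hε₂ hgap a ha k hk Ω mΩ ℙ X hpois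
end

section
/- Let α > 2, P > 0 and N₀ > 0 be real constants, and set A = P·∑_{t=1}^{∞} 8t·(7t−1)^{−α} and B = P·∑_{t=1}^{∞} 8t·(7t−6)^{−α}. Then there exists a constant K₁ > 0, depending only on α, P and N₀ (and in particular independent of a), namely K₁ = (1/64)·ln(1 + P·5^{−α/2} / (N₀ + 2B)), such that for every a > 0, every distance d with 0 < d ≤ √(5a), and all interference values I_p ∈ [0, A] and I_sp ∈ [0, B], one has (1/64)·ln(1 + P·a^{α/2}·d^{−α} / (N₀ + I_p + I_sp)) ≥ K₁ = (1/64)·ln(1 + P·5^{−α/2} / (N₀ + 2B)) > 0. -/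
open Real

lemma summable_aux (α : ℝ) (hα : 2 < α) (c : ℝ) (hc : c ≤ 6) :
    Summable (fun t : ℕ+ => 8 * (t : ℝ) * (7 * (t : ℝ) - c) ^ (-α)) := by
  rw [← Equiv.pnatEquivNat.symm.summable_iff]
  have hcoe : ∀ n : ℕ, ((Equiv.pnatEquivNat.symm n : ℕ+) : ℝ) = (n:ℝ) + 1 := by
    intro n; simp [Equiv.pnatEquivNat]
  simp only [Function.comp_def, hcoe]
  have hpos : ∀ n : ℕ, (0:ℝ) < 7 * ((n:ℝ)+1) - c := by
    intro n
    have : (7:ℝ) ≤ 7 * ((n:ℝ)+1) := by nlinarith [Nat.cast_nonneg (α := ℝ) n]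
    nlinarith
  apply Summable.of_nonneg_of_le (f := fun n : ℕ => 8 * ((n:ℝ)+1) ^ (1 - α))
  · intro n
    have h := (hpos n).le
    have hn1 : (0:ℝ) ≤ (n:ℝ) + 1 := by positivity
    exact mul_nonneg (by positivity) (Real.rpow_nonneg h _)
  · intro n
    have hn1 : (0:ℝ) < (n:ℝ) + 1 := by positivity
    have h1 : (7 * ((n:ℝ)+1) - c) ^ (-α) ≤ ((n:ℝ)+1) ^ (-α) := by
      apply rpow_le_rpow_of_nonpos hn1 _ (by linarith)
      nlinarith [Nat.cast_nonneg (α := ℝ) n]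
    calc 8 * ((n:ℝ)+1) * (7 * ((n:ℝ)+1) - c) ^ (-α)
        ≤ 8 * ((n:ℝ)+1) * ((n:ℝ)+1) ^ (-α) := by
          apply mul_le_mul_of_nonneg_left h1 (by positivity)
      _ = 8 * ((n:ℝ)+1) ^ (1 - α) := by
          rw [mul_assoc, ← Real.rpow_one_add' (by positivity) (by intro h; nlinarith)]
          ring_nf
  · apply Summable.mul_left
    have := (Real.summable_nat_rpow (p := 1 - α)).2 (by linarith)
    have := (summable_nat_add_iff 1).2 this
    simpa using this

/-- **Lemma 3 of the paper.** Let `α > 2`, `P > 0`, `N₀ > 0`, and set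
`A = P ∑_{t≥1} 8t (7t-1)^{-α}` and `B = P ∑_{t≥1} 8t (7t-6)^{-α}`. Then
`K₁ = (1/64) ln(1 + P 5^{-α/2}/(N₀ + 2B)) > 0` is a constant, independent of the cell
area `a`, such that for every `a > 0`, every distance `0 < d ≤ √(5a)`, and all
interference values `I_p ∈ [0, A]`, `I_sp ∈ [0, B]`, the 64-TDMA rate satisfies
`(1/64) ln(1 + P a^{α/2} d^{-α}/(N₀ + I_p + I_sp)) ≥ K₁`. -/
theorem active_primary_cell_constant_rate (α P N₀ : ℝ) (hα : 2 < α) (hP : 0 < P)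
    (hN₀ : 0 < N₀)
    (A B : ℝ)
    (hA : A = P * ∑' t : ℕ+, 8 * (t : ℝ) * (7 * (t : ℝ) - 1) ^ (-α))
    (hB : B = P * ∑' t : ℕ+, 8 * (t : ℝ) * (7 * (t : ℝ) - 6) ^ (-α)) :
    ∃ K₁ : ℝ,
      K₁ = (1 / 64) * Real.log (1 + P * (5 : ℝ) ^ (-(α / 2)) / (N₀ + 2 * B)) ∧
      0 < K₁ ∧
      ∀ a : ℝ, 0 < a → ∀ d : ℝ, 0 < d → d ≤ Real.sqrt (5 * a) →
        ∀ Ip ∈ Set.Icc (0 : ℝ) A, ∀ Isp ∈ Set.Icc (0 : ℝ) B,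
          K₁ ≤ (1 / 64) *
            Real.log (1 + P * a ^ (α / 2) * d ^ (-α) / (N₀ + Ip + Isp)) := by
  have hSA := summable_aux α hα 1 (by norm_num)
  have hSB := summable_aux α hα 6 le_rfl
  have htpos : ∀ t : ℕ+, (1:ℝ) ≤ (t:ℝ) := fun t => by exact_mod_cast t.one_le
  have hB0 : 0 ≤ B := by
    rw [hB]
    apply mul_nonneg hP.le
    apply tsum_nonneg
    intro t
    have ht := htpos t
    have h7 : (0:ℝ) ≤ 7 * (t:ℝ) - 6 := by linarith
    exact mul_nonneg (by positivity) (Real.rpow_nonneg h7 _)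
  have hAB : A ≤ B := by
    rw [hA, hB]
    apply mul_le_mul_of_nonneg_left _ hP.le
    apply Summable.tsum_le_tsum _ hSA hSB
    intro t
    have ht := htpos t
    apply mul_le_mul_of_nonneg_left _ (by positivity)
    apply rpow_le_rpow_of_nonpos (by nlinarith) (by nlinarith) (by linarith)
  set S := P * (5 : ℝ) ^ (-(α / 2)) / (N₀ + 2 * B) with hS
  have hdenom : 0 < N₀ + 2 * B := by linarith
  have hSpos : 0 < S := by
    apply div_pos (by positivity) hdenom
  refine ⟨(1/64) * Real.log (1 + S), rfl, ?_, ?_⟩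
  · have : 0 < Real.log (1 + S) := Real.log_pos (by linarith)
    positivity
  · intro a ha d hd hdle Ip hIp Isp hIsp
    obtain ⟨hIp0, hIpA⟩ := hIp
    obtain ⟨hIsp0, hIspB⟩ := hIsp
    have hden2 : 0 < N₀ + Ip + Isp := by linarith
    have hnum : P * (5 : ℝ) ^ (-(α / 2)) ≤ P * a ^ (α / 2) * d ^ (-α) := by
      have h5a : (0:ℝ) < 5 * a := by linarith
      have h1 : d ^ (-α) ≥ (Real.sqrt (5*a)) ^ (-α) :=
        rpow_le_rpow_of_nonpos hd hdle (by linarith)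
      have h2 : (Real.sqrt (5*a)) ^ (-α) = (5*a) ^ (-(α/2)) := by
        rw [Real.sqrt_eq_rpow, ← Real.rpow_mul h5a.le]
        ring_nf
      have h3 : (5*a) ^ (-(α/2)) = (5:ℝ) ^ (-(α/2)) * a ^ (-(α/2)) :=
        Real.mul_rpow (by norm_num) ha.le
      have h4 : a ^ (α/2) * a ^ (-(α/2)) = 1 := by
        rw [← Real.rpow_add ha]; simp
      calc P * (5 : ℝ) ^ (-(α / 2))
          = P * a ^ (α/2) * ((5*a) ^ (-(α/2))) := by
            rw [h3]; linear_combination (-(P * (5:ℝ) ^ (-(α/2)))) * h4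
        _ ≤ P * a ^ (α/2) * d ^ (-α) := by
            rw [← h2]
            exact mul_le_mul_of_nonneg_left h1 (by positivity)
    have hratio : S ≤ P * a ^ (α / 2) * d ^ (-α) / (N₀ + Ip + Isp) := by
      rw [hS]
      apply div_le_div₀ (by positivity) hnum hden2 (by linarith)
    have hlog := Real.log_le_log (by linarith) (by linarith : 1 + S ≤ 1 + P * a ^ (α / 2) * d ^ (-α) / (N₀ + Ip + Isp))
    linarith
end
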